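/- arXiv:2401.08879 — 3 statements merged into one kernel-verified Lean document; each statement's English description precedes it below -/
import Mathlib

section
/- The removal-based contribution function ctrb^r and the intrinsic-removal contribution function ctrb^{ri} violate the contribution existence principle (and hence the quantitative contribution existence principle) with respect to each of the DFQuAD, SD-DFQuAD, and EBT semantics: for each of these three semantics there exist an acyclic QBAG G and an argument a ∈ A such that σ_G(a) ≠ τ(a) yet ctrb^r_{G,a}(x) = 0 for all x ∈ A∖{a}, and likewise ctrb^{ri}_{G,a}(x) = 0 for all x ∈ A∖{a}. (A witness is the QBAG with A = {a, b, c}, τ(a) = 0.5, τ(b) = τ(c) = 1, and attacks (b,a), (c,a).) -/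
open Finset

/-- A quantitative bipolar argumentation graph (QBAG): a finite set of arguments,
an initial strength function, and attack and support relations. -/
structure QBAG where
  args : Finset ℕ
  tau : ℕ → ℝ
  att : Finset (ℕ × ℕ)
  supp : Finset (ℕ × ℕ)

namespace QBAG

/-- The edge relation of the underlying directed graph (attack or support). -/
def edge (G : QBAG) (x y : ℕ) : Prop := (x, y) ∈ G.att ∨ (x, y) ∈ G.supp

/-- Well-formedness: edges live on the arguments, attack and support are disjoint,
and initial strengths lie in [0,1]. -/
def WF (G : QBAG) : Prop :=
  (∀ p ∈ G.att, p.1 ∈ G.args ∧ p.2 ∈ G.args) ∧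
  (∀ p ∈ G.supp, p.1 ∈ G.args ∧ p.2 ∈ G.args) ∧
  Disjoint G.att G.supp ∧
  (∀ a ∈ G.args, G.tau a ∈ Set.Icc (0 : ℝ) 1)

/-- Acyclicity of the directed graph (A, Att ∪ Supp). -/
def Acyclic (G : QBAG) : Prop := ∀ x, ¬ Relation.TransGen G.edge x x

/-- Direct attackers of an argument. -/
def attackers (G : QBAG) (a : ℕ) : Finset ℕ :=
  (G.att.filter (fun p => p.2 = a)).image Prod.fst

/-- Direct supporters of an argument. -/
def supporters (G : QBAG) (a : ℕ) : Finset ℕ :=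
  (G.supp.filter (fun p => p.2 = a)).image Prod.fst

/-- Restriction G↓S of a QBAG to a subset S of the arguments. -/
def restrict (G : QBAG) (S : Finset ℕ) : QBAG where
  args := G.args ∩ S
  tau := G.tau
  att := G.att.filter (fun p => p.1 ∈ S ∧ p.2 ∈ S)
  supp := G.supp.filter (fun p => p.1 ∈ S ∧ p.2 ∈ S)

/-- G⁻: the QBAG G with every attack and support edge pointing into x removed. -/
def dropInto (G : QBAG) (x : ℕ) : QBAG where
  args := G.args
  tau := G.tau
  att := G.att.filter (fun p => p.2 ≠ x)
  supp := G.supp.filter (fun p => p.2 ≠ x)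

/-- G[x←ε]: the QBAG G with the initial strength of x replaced by ε. -/
def setTau (G : QBAG) (x : ℕ) (ε : ℝ) : QBAG where
  args := G.args
  tau := Function.update G.tau x ε
  att := G.att
  supp := G.supp

end QBAG

noncomputable section

/-- Sum aggregation. -/
def sumAgg (G : QBAG) (s : ℕ → ℝ) (a : ℕ) : ℝ :=
  (∑ y ∈ G.supporters a, s y) - (∑ y ∈ G.attackers a, s y)

/-- Product aggregation. -/
def prodAgg (G : QBAG) (s : ℕ → ℝ) (a : ℕ) : ℝ :=
  (∏ y ∈ G.attackers a, (1 - s y)) - (∏ y ∈ G.supporters a, (1 - s y))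

/-- Top aggregation. -/
def topAgg (G : QBAG) (s : ℕ → ℝ) (a : ℕ) : ℝ :=
  (G.supporters a).fold max 0 s - (G.attackers a).fold max 0 s

/-- h for the 2-Max(1) influence function. -/
def h2 (x : ℝ) : ℝ := max 0 x ^ 2 / (1 + max 0 x ^ 2)

/-- h for the 1-Max(1) influence function. -/
def h1 (x : ℝ) : ℝ := max 0 x / (1 + max 0 x)

/-- 2-Max(1) influence function (used by QE). -/
def iotaQE (w s : ℝ) : ℝ := w - w * h2 (-s) + (1 - w) * h2 s

/-- Linear(1) influence function (used by DFQuAD). -/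
def iotaLin (w s : ℝ) : ℝ := w - w * max 0 (-s) + (1 - w) * max 0 s

/-- 1-Max(1) influence function (used by SD-DFQuAD). -/
def iotaSD (w s : ℝ) : ℝ := w - w * h1 (-s) + (1 - w) * h1 s

/-- Euler-based influence function (used by EB and EBT). -/
def iotaEB (w s : ℝ) : ℝ := 1 - (1 - w ^ 2) / (1 + w * Real.exp s)

/-- σ is a modular semantics with aggregation `agg` and influence `iota`:
on every well-formed acyclic QBAG the final strengths satisfy the defining equations. -/
def IsSemantics (agg : QBAG → (ℕ → ℝ) → ℕ → ℝ) (iota : ℝ → ℝ → ℝ)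
    (σ : QBAG → ℕ → ℝ) : Prop :=
  ∀ G : QBAG, G.WF → G.Acyclic → ∀ a ∈ G.args, σ G a = iota (G.tau a) (agg G (σ G) a)

/-- QE semantics. -/
def IsQE (σ : QBAG → ℕ → ℝ) : Prop := IsSemantics sumAgg iotaQE σ

/-- DFQuAD semantics. -/
def IsDF (σ : QBAG → ℕ → ℝ) : Prop := IsSemantics prodAgg iotaLin σ

/-- SD-DFQuAD semantics. -/
def IsSD (σ : QBAG → ℕ → ℝ) : Prop := IsSemantics prodAgg iotaSD σ

/-- EB semantics. -/
def IsEB (σ : QBAG → ℕ → ℝ) : Prop := IsSemantics sumAgg iotaEB σ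

/-- EBT semantics. -/
def IsEBT (σ : QBAG → ℕ → ℝ) : Prop := IsSemantics topAgg iotaEB σ

/-- A gradual semantics assigns final strengths in [0,1] on acyclic QBAGs. -/
def IsGradualSemantics (σ : QBAG → ℕ → ℝ) : Prop :=
  ∀ G : QBAG, G.WF → G.Acyclic → ∀ a ∈ G.args, σ G a ∈ Set.Icc (0 : ℝ) 1

/-- Removal-based contribution: ctrb^r_{G,a}(x) = σ_G(a) − σ_{G↓(A∖{x})}(a). -/
def ctrbR (σ : QBAG → ℕ → ℝ) (G : QBAG) (a x : ℕ) : ℝ :=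
  σ G a - σ (G.restrict (G.args.erase x)) a

/-- Intrinsic-removal contribution: ctrb^{ri}_{G,a}(x) = σ_{G⁻}(a) − σ_{G↓(A∖{x})}(a). -/
def ctrbRI (σ : QBAG → ℕ → ℝ) (G : QBAG) (a x : ℕ) : ℝ :=
  σ (G.dropInto x) a - σ (G.restrict (G.args.erase x)) a

/-- Shapley-based contribution. -/
def ctrbS (σ : QBAG → ℕ → ℝ) (G : QBAG) (a x : ℕ) : ℝ :=
  ∑ X ∈ ((G.args.erase a).erase x).powerset,
    ((X.card.factorial : ℝ) * ((G.args.erase a).card - X.card - 1).factorial /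
      (G.args.erase a).card.factorial) *
    (σ (G.restrict (G.args \ X)) a - σ (G.restrict (G.args \ insert x X)) a)

/-- Gradient-based contribution: the derivative at ε = τ(x) (within [0,1]) of
the map ε ↦ σ_{G[x←ε]}(a). -/
def ctrbG (σ : QBAG → ℕ → ℝ) (G : QBAG) (a x : ℕ) : ℝ :=
  derivWithin (fun ε => σ (G.setTau x ε) a) (Set.Icc (0 : ℝ) 1) (G.tau x)

/-- The contribution existence principle. -/
def ContributionExistence (ctrb : QBAG → ℕ → ℕ → ℝ) (σ : QBAG → ℕ → ℝ) : Prop :=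
  ∀ G : QBAG, G.WF → G.Acyclic → ∀ a ∈ G.args,
    σ G a ≠ G.tau a → ∃ x ∈ G.args, x ≠ a ∧ ctrb G a x ≠ 0

/-- The quantitative contribution existence principle. -/
def QuantContributionExistence (ctrb : QBAG → ℕ → ℕ → ℝ) (σ : QBAG → ℕ → ℝ) : Prop :=
  ∀ G : QBAG, G.WF → G.Acyclic → ∀ a ∈ G.args,
    ∑ x ∈ G.args.erase a, ctrb G a x = σ G a - G.tau a

/-- The strong faithfulness principle. -/
def StrongFaithfulness (ctrb : QBAG → ℕ → ℕ → ℝ) (σ : QBAG → ℕ → ℝ) : Prop :=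
  ∀ G : QBAG, G.WF → G.Acyclic → ∀ a ∈ G.args, ∀ x ∈ G.args,
    ∀ ε ∈ Set.Icc (0 : ℝ) 1,
      (ctrb G a x < 0 →
        (ε < G.tau x → σ G a < σ (G.setTau x ε) a) ∧
        (ε > G.tau x → σ G a > σ (G.setTau x ε) a)) ∧
      (ctrb G a x = 0 → σ G a = σ (G.setTau x ε) a) ∧
      (ctrb G a x > 0 →
        (ε < G.tau x → σ G a > σ (G.setTau x ε) a) ∧
        (ε > G.tau x → σ G a < σ (G.setTau x ε) a))

/-- The local faithfulness principle. -/
def LocalFaithfulness (ctrb : QBAG → ℕ → ℕ → ℝ) (σ : QBAG → ℕ → ℝ) : Prop :=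
  ∀ G : QBAG, G.WF → G.Acyclic → ∀ a ∈ G.args, ∀ x ∈ G.args,
    ∃ δ > 0, ∀ ε ∈ Set.Icc (G.tau x - δ) (G.tau x + δ) ∩ Set.Icc (0 : ℝ) 1,
      (ctrb G a x < 0 →
        (ε < G.tau x → σ G a < σ (G.setTau x ε) a) ∧
        (ε > G.tau x → σ G a > σ (G.setTau x ε) a)) ∧
      (ctrb G a x > 0 →
        (ε < G.tau x → σ G a > σ (G.setTau x ε) a) ∧
        (ε > G.tau x → σ G a < σ (G.setTau x ε) a))

/-- The quantitative local faithfulness principle: the map ε ↦ σ_{G[x←ε]}(a) is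
differentiable (within [0,1]) at τ(x) with derivative ctrb_{G,a}(x); equivalently
σ_{G[x←τ(x)+ε]}(a) = σ_G(a) + ε·ctrb_{G,a}(x) + e(ε) with e(ε)/ε → 0. -/
def QuantLocalFaithfulness (ctrb : QBAG → ℕ → ℕ → ℝ) (σ : QBAG → ℕ → ℝ) : Prop :=
  ∀ G : QBAG, G.WF → G.Acyclic → ∀ a ∈ G.args, ∀ x ∈ G.args,
    HasDerivWithinAt (fun ε => σ (G.setTau x ε) a) (ctrb G a x)
      (Set.Icc (0 : ℝ) 1) (G.tau x)

/-- The counterfactuality principle. -/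
def Counterfactuality (ctrb : QBAG → ℕ → ℕ → ℝ) (σ : QBAG → ℕ → ℝ) : Prop :=
  ∀ G : QBAG, G.WF → G.Acyclic → ∀ a ∈ G.args, ∀ x ∈ G.args,
    (ctrb G a x < 0 → σ G a < σ (G.restrict (G.args.erase x)) a) ∧
    (ctrb G a x = 0 → σ G a = σ (G.restrict (G.args.erase x)) a) ∧
    (ctrb G a x > 0 → σ G a > σ (G.restrict (G.args.erase x)) a)

/-- The quantitative counterfactuality principle. -/
def QuantCounterfactuality (ctrb : QBAG → ℕ → ℕ → ℝ) (σ : QBAG → ℕ → ℝ) : Prop :=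
  ∀ G : QBAG, G.WF → G.Acyclic → ∀ a ∈ G.args, ∀ x ∈ G.args,
    ctrb G a x = σ G a - σ (G.restrict (G.args.erase x)) a

end

/-- Witness graph: arguments {0,1,2}, τ(0)=1/2, τ(1)=τ(2)=1, attacks (1,0),(2,0). -/
noncomputable def myG : QBAG :=
  ⟨{0, 1, 2}, fun n => if n = 0 then 1/2 else 1, {(1, 0), (2, 0)}, ∅⟩

/-- Explicit form of myG restricted to {0,2}. -/
noncomputable def myR1 : QBAG :=
  ⟨{0, 2}, fun n => if n = 0 then 1/2 else 1, {(2, 0)}, ∅⟩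

/-- Explicit form of myG restricted to {0,1}. -/
noncomputable def myR2 : QBAG :=
  ⟨{0, 1}, fun n => if n = 0 then 1/2 else 1, {(1, 0)}, ∅⟩

lemma acyclic_of (G : QBAG) (h : ∀ u v, G.edge u v → v = 0 ∧ u ≠ 0) : G.Acyclic := by
  intro x hx
  have hx0 : x = 0 := by
    cases hx with
    | single h' => exact (h _ _ h').1
    | tail _ h' => exact (h _ _ h').1
  subst hx0
  obtain ⟨b, h', -⟩ := Relation.TransGen.head'_iff.mp hx
  exact (h _ _ h').2 rfl

lemma edge_myG : ∀ u v, myG.edge u v → v = 0 ∧ u ≠ 0 := by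
  intro u v h
  simp [QBAG.edge, myG, Prod.ext_iff] at h
  rcases h with ⟨h1, h2⟩ | ⟨h1, h2⟩ <;> omega

lemma edge_myR1 : ∀ u v, myR1.edge u v → v = 0 ∧ u ≠ 0 := by
  intro u v h
  simp [QBAG.edge, myR1, Prod.ext_iff] at h
  omega

lemma edge_myR2 : ∀ u v, myR2.edge u v → v = 0 ∧ u ≠ 0 := by
  intro u v h
  simp [QBAG.edge, myR2, Prod.ext_iff] at h
  omega

lemma tau_mem (a : ℕ) : (if a = 0 then (1/2 : ℝ) else 1) ∈ Set.Icc (0:ℝ) 1 := by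
  split <;> norm_num

lemma wf_myG : myG.WF :=
  ⟨by decide, by decide, by simp [myG], fun a _ => tau_mem a⟩

lemma wf_myR1 : myR1.WF :=
  ⟨by decide, by decide, by simp [myR1], fun a _ => tau_mem a⟩

lemma wf_myR2 : myR2.WF :=
  ⟨by decide, by decide, by simp [myR2], fun a _ => tau_mem a⟩

lemma ac_myG : myG.Acyclic := acyclic_of _ edge_myG
lemma ac_myR1 : myR1.Acyclic := acyclic_of _ edge_myR1
lemma ac_myR2 : myR2.Acyclic := acyclic_of _ edge_myR2

lemma restrict_eq1 : myG.restrict (myG.args.erase 1) = myR1 := by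
  show QBAG.mk _ _ _ _ = QBAG.mk _ _ _ _
  rw [QBAG.mk.injEq]
  exact ⟨by decide, rfl, by decide, by decide⟩

lemma restrict_eq2 : myG.restrict (myG.args.erase 2) = myR2 := by
  show QBAG.mk _ _ _ _ = QBAG.mk _ _ _ _
  rw [QBAG.mk.injEq]
  exact ⟨by decide, rfl, by decide, by decide⟩

lemma drop_eq1 : myG.dropInto 1 = myG := by
  show QBAG.mk _ _ _ _ = QBAG.mk _ _ _ _
  rw [QBAG.mk.injEq]
  exact ⟨rfl, rfl, by decide, by decide⟩

lemma drop_eq2 : myG.dropInto 2 = myG := by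
  show QBAG.mk _ _ _ _ = QBAG.mk _ _ _ _
  rw [QBAG.mk.injEq]
  exact ⟨rfl, rfl, by decide, by decide⟩

-- attacker / supporter computations
lemma attG0 : myG.attackers 0 = {1, 2} := by decide
lemma attG1 : myG.attackers 1 = ∅ := by decide
lemma attG2 : myG.attackers 2 = ∅ := by decide
lemma supG0 : myG.supporters 0 = ∅ := by decide
lemma supG1 : myG.supporters 1 = ∅ := by decide
lemma supG2 : myG.supporters 2 = ∅ := by decide
lemma attR1_0 : myR1.attackers 0 = {2} := by decide
lemma attR1_2 : myR1.attackers 2 = ∅ := by decide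
lemma supR1_0 : myR1.supporters 0 = ∅ := by decide
lemma supR1_2 : myR1.supporters 2 = ∅ := by decide
lemma attR2_0 : myR2.attackers 0 = {1} := by decide
lemma attR2_1 : myR2.attackers 1 = ∅ := by decide
lemma supR2_0 : myR2.supporters 0 = ∅ := by decide
lemma supR2_1 : myR2.supporters 1 = ∅ := by decide

lemma tauG0 : myG.tau 0 = 1/2 := by norm_num [myG]
lemma tauG1 : myG.tau 1 = 1 := by norm_num [myG]
lemma tauG2 : myG.tau 2 = 1 := by norm_num [myG]
lemma tauR1_0 : myR1.tau 0 = 1/2 := by norm_num [myR1]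
lemma tauR1_2 : myR1.tau 2 = 1 := by norm_num [myR1]
lemma tauR2_0 : myR2.tau 0 = 1/2 := by norm_num [myR2]
lemma tauR2_1 : myR2.tau 1 = 1 := by norm_num [myR2]

lemma key_DF (σ : QBAG → ℕ → ℝ) (h : IsDF σ) :
    σ myG 0 = 0 ∧ σ myR1 0 = 0 ∧ σ myR2 0 = 0 := by
  have s1 : σ myG 1 = 1 := by
    have hag : prodAgg myG (σ myG) 1 = 0 := by rw [prodAgg, attG1, supG1]; simp
    rw [h myG wf_myG ac_myG 1 (by decide), hag, tauG1]
    norm_num [iotaLin]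
  have s2 : σ myG 2 = 1 := by
    have hag : prodAgg myG (σ myG) 2 = 0 := by rw [prodAgg, attG2, supG2]; simp
    rw [h myG wf_myG ac_myG 2 (by decide), hag, tauG2]
    norm_num [iotaLin]
  have r1 : σ myR1 2 = 1 := by
    have hag : prodAgg myR1 (σ myR1) 2 = 0 := by rw [prodAgg, attR1_2, supR1_2]; simp
    rw [h myR1 wf_myR1 ac_myR1 2 (by decide), hag, tauR1_2]
    norm_num [iotaLin]
  have r2 : σ myR2 1 = 1 := by
    have hag : prodAgg myR2 (σ myR2) 1 = 0 := by rw [prodAgg, attR2_1, supR2_1]; simp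
    rw [h myR2 wf_myR2 ac_myR2 1 (by decide), hag, tauR2_1]
    norm_num [iotaLin]
  refine ⟨?_, ?_, ?_⟩
  · have hag : prodAgg myG (σ myG) 0 = -1 := by
      rw [prodAgg, attG0, supG0, Finset.prod_insert (by decide), Finset.prod_singleton, s1, s2]
      norm_num
    rw [h myG wf_myG ac_myG 0 (by decide), hag, tauG0]
    norm_num [iotaLin]
  · have hag : prodAgg myR1 (σ myR1) 0 = -1 := by
      rw [prodAgg, attR1_0, supR1_0, Finset.prod_singleton, r1]
      norm_num
    rw [h myR1 wf_myR1 ac_myR1 0 (by decide), hag, tauR1_0]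
    norm_num [iotaLin]
  · have hag : prodAgg myR2 (σ myR2) 0 = -1 := by
      rw [prodAgg, attR2_0, supR2_0, Finset.prod_singleton, r2]
      norm_num
    rw [h myR2 wf_myR2 ac_myR2 0 (by decide), hag, tauR2_0]
    norm_num [iotaLin]

lemma key_SD (σ : QBAG → ℕ → ℝ) (h : IsSD σ) :
    σ myG 0 = 1/4 ∧ σ myR1 0 = 1/4 ∧ σ myR2 0 = 1/4 := by
  have s1 : σ myG 1 = 1 := by
    have hag : prodAgg myG (σ myG) 1 = 0 := by rw [prodAgg, attG1, supG1]; simp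
    rw [h myG wf_myG ac_myG 1 (by decide), hag, tauG1]
    norm_num [iotaSD, h1]
  have s2 : σ myG 2 = 1 := by
    have hag : prodAgg myG (σ myG) 2 = 0 := by rw [prodAgg, attG2, supG2]; simp
    rw [h myG wf_myG ac_myG 2 (by decide), hag, tauG2]
    norm_num [iotaSD, h1]
  have r1 : σ myR1 2 = 1 := by
    have hag : prodAgg myR1 (σ myR1) 2 = 0 := by rw [prodAgg, attR1_2, supR1_2]; simp
    rw [h myR1 wf_myR1 ac_myR1 2 (by decide), hag, tauR1_2]
    norm_num [iotaSD, h1]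
  have r2 : σ myR2 1 = 1 := by
    have hag : prodAgg myR2 (σ myR2) 1 = 0 := by rw [prodAgg, attR2_1, supR2_1]; simp
    rw [h myR2 wf_myR2 ac_myR2 1 (by decide), hag, tauR2_1]
    norm_num [iotaSD, h1]
  refine ⟨?_, ?_, ?_⟩
  · have hag : prodAgg myG (σ myG) 0 = -1 := by
      rw [prodAgg, attG0, supG0, Finset.prod_insert (by decide), Finset.prod_singleton, s1, s2]
      norm_num
    rw [h myG wf_myG ac_myG 0 (by decide), hag, tauG0]
    norm_num [iotaSD, h1]
  · have hag : prodAgg myR1 (σ myR1) 0 = -1 := by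
      rw [prodAgg, attR1_0, supR1_0, Finset.prod_singleton, r1]
      norm_num
    rw [h myR1 wf_myR1 ac_myR1 0 (by decide), hag, tauR1_0]
    norm_num [iotaSD, h1]
  · have hag : prodAgg myR2 (σ myR2) 0 = -1 := by
      rw [prodAgg, attR2_0, supR2_0, Finset.prod_singleton, r2]
      norm_num
    rw [h myR2 wf_myR2 ac_myR2 0 (by decide), hag, tauR2_0]
    norm_num [iotaSD, h1]

lemma iotaEB_ne : iotaEB (1/2) (-1) ≠ 1/2 := by
  rw [iotaEB]
  intro hc
  have hpos : (0:ℝ) < 1 + (1/2) * Real.exp (-1) := by positivity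
  have hlt : Real.exp (-1) < 1 := by
    rw [Real.exp_lt_one_iff]; norm_num
  field_simp at hc
  nlinarith [Real.exp_pos (-1)]

lemma key_EBT (σ : QBAG → ℕ → ℝ) (h : IsEBT σ) :
    σ myG 0 = iotaEB (1/2) (-1) ∧ σ myR1 0 = iotaEB (1/2) (-1) ∧
      σ myR2 0 = iotaEB (1/2) (-1) := by
  have hexp0 : iotaEB 1 0 = 1 := by
    rw [iotaEB]; norm_num
  have s1 : σ myG 1 = 1 := by
    have hag : topAgg myG (σ myG) 1 = 0 := by rw [topAgg, attG1, supG1]; simp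
    rw [h myG wf_myG ac_myG 1 (by decide), hag, tauG1, hexp0]
  have s2 : σ myG 2 = 1 := by
    have hag : topAgg myG (σ myG) 2 = 0 := by rw [topAgg, attG2, supG2]; simp
    rw [h myG wf_myG ac_myG 2 (by decide), hag, tauG2, hexp0]
  have r1 : σ myR1 2 = 1 := by
    have hag : topAgg myR1 (σ myR1) 2 = 0 := by rw [topAgg, attR1_2, supR1_2]; simp
    rw [h myR1 wf_myR1 ac_myR1 2 (by decide), hag, tauR1_2, hexp0]
  have r2 : σ myR2 1 = 1 := by
    have hag : topAgg myR2 (σ myR2) 1 = 0 := by rw [topAgg, attR2_1, supR2_1]; simp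
    rw [h myR2 wf_myR2 ac_myR2 1 (by decide), hag, tauR2_1, hexp0]
  refine ⟨?_, ?_, ?_⟩
  · have hag : topAgg myG (σ myG) 0 = -1 := by
      rw [topAgg, attG0, supG0, Finset.fold_insert (by decide), Finset.fold_singleton, s1, s2]
      simp
    rw [h myG wf_myG ac_myG 0 (by decide), hag, tauG0]
  · have hag : topAgg myR1 (σ myR1) 0 = -1 := by
      rw [topAgg, attR1_0, supR1_0, Finset.fold_singleton, r1]
      simp
    rw [h myR1 wf_myR1 ac_myR1 0 (by decide), hag, tauR1_0]
  · have hag : topAgg myR2 (σ myR2) 0 = -1 := by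
      rw [topAgg, attR2_0, supR2_0, Finset.fold_singleton, r2]
      simp
    rw [h myR2 wf_myR2 ac_myR2 0 (by decide), hag, tauR2_0]

lemma key_all (σ : QBAG → ℕ → ℝ) (h : IsDF σ ∨ IsSD σ ∨ IsEBT σ) :
    σ myG 0 ≠ myG.tau 0 ∧ σ myR1 0 = σ myG 0 ∧ σ myR2 0 = σ myG 0 := by
  rcases h with h | h | h
  · obtain ⟨e0, e1, e2⟩ := key_DF σ h
    rw [e0, e1, e2, tauG0]; norm_num
  · obtain ⟨e0, e1, e2⟩ := key_SD σ h
    rw [e0, e1, e2, tauG0]; norm_num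
  · obtain ⟨e0, e1, e2⟩ := key_EBT σ h
    rw [e0, e1, e2, tauG0]
    exact ⟨iotaEB_ne, rfl, rfl⟩

/-- ctrb^r and ctrb^{ri} violate contribution existence (and hence
quantitative contribution existence) w.r.t. each of the DFQuAD, SD-DFQuAD, and EBT
semantics: there is an acyclic QBAG G and a ∈ A with σ_G(a) ≠ τ(a) yet all
contributions of arguments other than a are 0. -/
theorem ctrbR_ctrbRI_violate_contribution_existence_DF_SD_EBT :
    ∀ σ : QBAG → ℕ → ℝ, (IsDF σ ∨ IsSD σ ∨ IsEBT σ) →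
      ¬ ContributionExistence (ctrbR σ) σ ∧
      ¬ ContributionExistence (ctrbRI σ) σ ∧
      ¬ QuantContributionExistence (ctrbR σ) σ ∧
      ¬ QuantContributionExistence (ctrbRI σ) σ ∧
      ∃ G : QBAG, G.WF ∧ G.Acyclic ∧ ∃ a ∈ G.args,
        σ G a ≠ G.tau a ∧
        ∀ x ∈ G.args, x ≠ a → ctrbR σ G a x = 0 ∧ ctrbRI σ G a x = 0 := by
  intro σ h
  obtain ⟨hne, hR1, hR2⟩ := key_all σ h
  have hz : ∀ x, x ≠ 0 → x ∈ myG.args → ctrbR σ myG 0 x = 0 ∧ ctrbRI σ myG 0 x = 0 := by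
    intro x hx0 hx
    have hx12 : x = 1 ∨ x = 2 := by
      have hx' : x = 0 ∨ x = 1 ∨ x = 2 := by simpa [myG] using hx
      tauto
    have hrest : σ (myG.restrict (myG.args.erase x)) 0 = σ myG 0 := by
      rcases hx12 with rfl | rfl
      · rw [restrict_eq1]; exact hR1
      · rw [restrict_eq2]; exact hR2
    refine ⟨by rw [ctrbR, hrest]; ring, ?_⟩
    rcases hx12 with rfl | rfl
    · rw [ctrbRI, drop_eq1, hrest]; ring
    · rw [ctrbRI, drop_eq2, hrest]; ring
  refine ⟨?_, ?_, ?_, ?_, myG, wf_myG, ac_myG, 0, by decide, hne,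
    fun x hx hxne => hz x hxne hx⟩
  · intro hC
    obtain ⟨x, hx, hxne, hc⟩ := hC myG wf_myG ac_myG 0 (by decide) hne
    exact hc (hz x hxne hx).1
  · intro hC
    obtain ⟨x, hx, hxne, hc⟩ := hC myG wf_myG ac_myG 0 (by decide) hne
    exact hc (hz x hxne hx).2
  · intro hQ
    have hs := hQ myG wf_myG ac_myG 0 (by decide)
    have hzero : ∑ x ∈ myG.args.erase 0, ctrbR σ myG 0 x = 0 :=
      Finset.sum_eq_zero fun x hx =>
        (hz x (Finset.mem_erase.mp hx).1 (Finset.mem_erase.mp hx).2).1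
    rw [hzero] at hs
    exact hne (by linarith)
  · intro hQ
    have hs := hQ myG wf_myG ac_myG 0 (by decide)
    have hzero : ∑ x ∈ myG.args.erase 0, ctrbRI σ myG 0 x = 0 :=
      Finset.sum_eq_zero fun x hx =>
        (hz x (Finset.mem_erase.mp hx).1 (Finset.mem_erase.mp hx).2).2
    rw [hzero] at hs
    exact hne (by linarith)
end

section
/- The Shapley-based contribution function ctrb^s satisfies the quantitative contribution existence principle with respect to each of the QE, DFQuAD, SD-DFQuAD, EB, and EBT semantics: for every acyclic QBAG G and every argument a ∈ A, Σ_{x ∈ A∖{a}} ctrb^s_{G,a}(x) = σ_G(a) − τ(a). -/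
open Finset

/-!
Shapley values are efficient. In `∑ x ∈ N, ∑ X ⊆ N \ {x}, w(#X) * (g X - g (X ∪ {x}))`, with
`w(k) = k! (n - k - 1)! / n!` and `n = #N`, the set `Y ⊆ N` occurs as `X` for `#(N \ Y)` choices of
`x` and as `X ∪ {x}` for `#Y` choices, so `g Y` has coefficient `(n - k) w(k) - k w(k - 1)` where
`k = #Y`; both terms equal `k! (n - k)! / n!`, except that the first vanishes for `Y = N` and the
second for `Y = ∅`. Hence the sum is `g ∅ - g N`.

For `N = A \ {a}` and `g X = σ (G↓(A \ X)) a` this is `σ G a - σ (G↓{a}) a`. By acyclicity `a`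
has neither attackers nor supporters in `G↓{a}`, so by stability of all five semantics the last
term is `τ a`.
-/

namespace Finset

variable {α β : Type*} [DecidableEq α] [AddCommMonoid β]

theorem sum_sum_powerset_erase (N : Finset α) (f : Finset α → β) :
    ∑ x ∈ N, ∑ X ∈ (N.erase x).powerset, f X = ∑ X ∈ N.powerset, #(N \ X) • f X := by
  refine (sum_comm' fun x X => ?_).trans (sum_congr rfl fun X _ => by rw [sum_const])
  simp only [mem_powerset, subset_erase, mem_sdiff]
  tauto

theorem sum_sum_powerset_erase_insert (N : Finset α) (f : ℕ → Finset α → β) :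
    ∑ x ∈ N, ∑ X ∈ (N.erase x).powerset, f #X (insert x X) =
      ∑ Y ∈ N.powerset, #Y • f (#Y - 1) Y := by
  have hinsert : ∀ x ∈ N, ∑ X ∈ (N.erase x).powerset, f #X (insert x X) =
      ∑ Y ∈ N.powerset with x ∈ Y, f (#Y - 1) Y := fun x hx => by
    refine sum_bij' (fun X _ => insert x X) (fun Y _ => Y.erase x) ?_ ?_ ?_ ?_ ?_ <;>
      simp +contextual only [mem_powerset, subset_erase, mem_filter, and_imp]
    · exact fun X hXN hxX => ⟨insert_subset hx hXN, mem_insert_self x X⟩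
    · exact fun Y hYN _ => ⟨(erase_subset x Y).trans hYN, notMem_erase x Y⟩
    · exact fun X _ hxX => erase_insert hxX
    · exact fun Y _ hxY => insert_erase hxY
    · intro X _ hxX
      rw [card_insert_of_notMem hxX, Nat.add_sub_cancel]
  rw [sum_congr rfl hinsert]
  refine (sum_comm' fun x Y => ?_).trans (sum_congr rfl fun Y _ => by rw [sum_const])
  simp only [mem_filter, mem_powerset]
  exact ⟨fun ⟨_, hY, hx⟩ => ⟨hx, hY⟩, fun ⟨hx, hY⟩ => ⟨hY hx, hY, hx⟩⟩

end Finset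

section Shapley

open Nat

def shapleyWeight (K : Type*) [Field K] (n k : ℕ) : K := k ! * (n - k - 1)! / n !

variable {α K : Type*} [Field K] [CharZero K]

theorem shapleyWeight_coeff {n k : ℕ} (hn : 0 < n) (hk : k ≤ n) :
    ((n - k : ℕ) : K) * shapleyWeight K n k - k * shapleyWeight K n (k - 1) =
      (if k = 0 then 1 else 0) - (if k = n then 1 else 0) := by
  have hn! : (n ! : K) ≠ 0 := Nat.cast_ne_zero.mpr n.factorial_ne_zero
  have mul_factorial_pred {m : ℕ} (hm : 0 < m) : (m : K) * (m - 1)! = m ! := by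
    exact_mod_cast Nat.mul_factorial_pred hm.ne'
  unfold shapleyWeight
  rcases Nat.eq_zero_or_pos k with rfl | hk0
  · simp only [if_pos, if_neg hn.ne, Nat.sub_zero, Nat.cast_zero, zero_mul, sub_zero,
      factorial_zero, Nat.cast_one, one_mul]
    field_simp
    exact mul_factorial_pred hn
  rcases hk.eq_or_lt with rfl | hkn
  · simp only [if_neg hk0.ne', if_pos, Nat.sub_self, Nat.cast_zero, zero_mul, zero_sub,
      show k - (k - 1) - 1 = 0 by omega, factorial_zero, Nat.cast_one, mul_one]
    field_simp
    rw [mul_factorial_pred hk0]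
  · rw [if_neg hk0.ne', if_neg hkn.ne, show n - (k - 1) - 1 = n - k by omega, sub_self]
    field_simp
    linear_combination (k ! : K) * mul_factorial_pred (Nat.sub_pos_of_lt hkn) -
      ((n - k)! : K) * mul_factorial_pred hk0

theorem sum_shapleyWeight_mul_sub [DecidableEq α] (N : Finset α) (g : Finset α → K) :
    ∑ x ∈ N, ∑ X ∈ (N.erase x).powerset, shapleyWeight K #N #X * (g X - g (insert x X)) =
      g ∅ - g N := by
  rcases N.eq_empty_or_nonempty with rfl | hN
  · simp
  have hcoeff : ∀ Y ∈ N.powerset,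
      #(N \ Y) • (shapleyWeight K #N #Y * g Y) - #Y • (shapleyWeight K #N (#Y - 1) * g Y) =
        ((if Y = ∅ then 1 else 0) - (if Y = N then 1 else 0)) * g Y := fun Y hY => by
    rw [mem_powerset] at hY
    have hk := shapleyWeight_coeff (K := K) hN.card_pos (card_le_card hY)
    have hYN : #Y = #N ↔ Y = N := ⟨fun h => eq_of_subset_of_card_le hY h.ge, congrArg card⟩
    simp only [Finset.card_eq_zero, hYN] at hk
    rw [nsmul_eq_mul, nsmul_eq_mul, card_sdiff_of_subset hY]
    linear_combination g Y * hk
  simp only [mul_sub, sum_sub_distrib, sum_sum_powerset_erase N fun X => shapleyWeight K #N #X * g X,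
    sum_sum_powerset_erase_insert N fun k Y => shapleyWeight K #N k * g Y]
  rw [← sum_sub_distrib, sum_congr rfl hcoeff]
  simp [sub_mul, sum_sub_distrib, ite_mul]

end Shapley

namespace QBAG

variable {G : QBAG}

theorem WF.restrict (hG : G.WF) (S : Finset ℕ) : (G.restrict S).WF := by
  obtain ⟨hatt, hsupp, hdisj, htau⟩ := hG
  refine ⟨fun p hp => ?_, fun p hp => ?_, disjoint_filter_filter hdisj,
    fun b hb => htau b (mem_inter.1 hb).1⟩
  · simp only [QBAG.restrict, mem_filter, mem_inter] at hp ⊢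
    exact ⟨⟨(hatt p hp.1).1, hp.2.1⟩, (hatt p hp.1).2, hp.2.2⟩
  · simp only [QBAG.restrict, mem_filter, mem_inter] at hp ⊢
    exact ⟨⟨(hsupp p hp.1).1, hp.2.1⟩, (hsupp p hp.1).2, hp.2.2⟩

theorem Acyclic.restrict (hG : G.Acyclic) (S : Finset ℕ) : (G.restrict S).Acyclic :=
  fun x hx => hG x <| Relation.TransGen.mono (fun _ _ => Or.imp (fun h => (mem_filter.1 h).1)
    (fun h => (mem_filter.1 h).1)) x x hx

theorem restrict_args (hG : G.WF) : G.restrict G.args = G := by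
  obtain ⟨hatt, hsupp, -, -⟩ := hG
  simp only [QBAG.restrict, inter_self, filter_true_of_mem hatt, filter_true_of_mem hsupp]

theorem Acyclic.not_edge_self (hG : G.Acyclic) (a : ℕ) : ¬ G.edge a a :=
  fun h => hG a (.single h)

theorem Acyclic.attackers_restrict_singleton (hG : G.Acyclic) (a : ℕ) :
    (G.restrict {a}).attackers a = ∅ := by
  simp only [attackers, QBAG.restrict, mem_singleton, image_eq_empty, filter_eq_empty_iff,
    mem_filter, and_imp, imp_not_self, Prod.forall]
  rintro _ _ h rfl rfl
  exact hG.not_edge_self _ (Or.inl h)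

theorem Acyclic.supporters_restrict_singleton (hG : G.Acyclic) (a : ℕ) :
    (G.restrict {a}).supporters a = ∅ := by
  simp only [supporters, QBAG.restrict, mem_singleton, image_eq_empty, filter_eq_empty_iff,
    mem_filter, and_imp, imp_not_self, Prod.forall]
  rintro _ _ h rfl rfl
  exact hG.not_edge_self _ (Or.inr h)

end QBAG

def IsStable (σ : QBAG → ℕ → ℝ) : Prop :=
  ∀ G : QBAG, G.WF → G.Acyclic → ∀ a ∈ G.args,
    G.attackers a = ∅ → G.supporters a = ∅ → σ G a = G.tau a

theorem IsSemantics.isStable {agg : QBAG → (ℕ → ℝ) → ℕ → ℝ} {iota : ℝ → ℝ → ℝ}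
    {σ : QBAG → ℕ → ℝ} (hσ : IsSemantics agg iota σ)
    (hagg : ∀ G s a, G.attackers a = ∅ → G.supporters a = ∅ → agg G s a = 0)
    (hiota : ∀ w ∈ Set.Icc (0 : ℝ) 1, iota w 0 = w) : IsStable σ :=
  fun G hG hAc a ha hatt hsupp => by
    rw [hσ G hG hAc a ha, hagg G _ a hatt hsupp, hiota _ (hG.2.2.2 a ha)]

theorem sumAgg_eq_zero {G : QBAG} (s : ℕ → ℝ) {a : ℕ} (hatt : G.attackers a = ∅)
    (hsupp : G.supporters a = ∅) : sumAgg G s a = 0 := by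
  simp [sumAgg, hatt, hsupp]

theorem prodAgg_eq_zero {G : QBAG} (s : ℕ → ℝ) {a : ℕ} (hatt : G.attackers a = ∅)
    (hsupp : G.supporters a = ∅) : prodAgg G s a = 0 := by
  simp [prodAgg, hatt, hsupp]

theorem topAgg_eq_zero {G : QBAG} (s : ℕ → ℝ) {a : ℕ} (hatt : G.attackers a = ∅)
    (hsupp : G.supporters a = ∅) : topAgg G s a = 0 := by
  simp [topAgg, hatt, hsupp]

theorem iotaQE_zero (w : ℝ) : iotaQE w 0 = w := by
  simp [iotaQE, h2]

theorem iotaLin_zero (w : ℝ) : iotaLin w 0 = w := by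
  simp [iotaLin]

theorem iotaSD_zero (w : ℝ) : iotaSD w 0 = w := by
  simp [iotaSD, h1]

theorem iotaEB_zero {w : ℝ} (hw : 0 ≤ w) : iotaEB w 0 = w := by
  have : 1 + w ≠ 0 := by positivity
  rw [iotaEB, Real.exp_zero, mul_one]
  field_simp
  ring

theorem IsStable.apply_restrict_singleton {σ : QBAG → ℕ → ℝ} (hσ : IsStable σ) {G : QBAG}
    (hG : G.WF) (hAc : G.Acyclic) {a : ℕ} (ha : a ∈ G.args) :
    σ (G.restrict {a}) a = G.tau a :=
  hσ _ (hG.restrict _) (hAc.restrict _) a (mem_inter.2 ⟨ha, mem_singleton_self a⟩)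
    (hAc.attackers_restrict_singleton a) (hAc.supporters_restrict_singleton a)

theorem IsStable.quantContributionExistence_ctrbS {σ : QBAG → ℕ → ℝ} (hσ : IsStable σ) :
    QuantContributionExistence (ctrbS σ) σ := by
  intro G hG hAc a ha
  have hshapley := sum_shapleyWeight_mul_sub (K := ℝ) (G.args.erase a)
    fun X => σ (G.restrict (G.args \ X)) a
  rw [sdiff_empty, G.restrict_args hG, sdiff_erase_self ha] at hshapley
  rw [← hσ.apply_restrict_singleton hG hAc ha, ← hshapley]
  rfl

/-- The Shapley-based contribution function satisfies quantitative
contribution existence w.r.t. each of the QE, DFQuAD, SD-DFQuAD, EB, and EBT semantics. -/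
theorem ctrbS_satisfies_quant_contribution_existence
    (σ : QBAG → ℕ → ℝ) (hσ : IsQE σ ∨ IsDF σ ∨ IsSD σ ∨ IsEB σ ∨ IsEBT σ) :
    QuantContributionExistence (ctrbS σ) σ := by
  refine IsStable.quantContributionExistence_ctrbS ?_
  rcases hσ with h | h | h | h | h
  · exact h.isStable (fun _ => sumAgg_eq_zero) fun w _ => iotaQE_zero w
  · exact h.isStable (fun _ => prodAgg_eq_zero) fun w _ => iotaLin_zero w
  · exact h.isStable (fun _ => prodAgg_eq_zero) fun w _ => iotaSD_zero w
  · exact h.isStable (fun _ => sumAgg_eq_zero) fun _ hw => iotaEB_zero hw.1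
  · exact h.isStable (fun _ => topAgg_eq_zero) fun _ hw => iotaEB_zero hw.1
end

section
/- The gradient-based contribution function ctrb^g satisfies the contribution existence principle with respect to the QE semantics and with respect to the EB semantics: for every acyclic QBAG G and topic argument a, if σ_G(a) ≠ τ(a) under QE (respectively EB) semantics, then there exists x ∈ A∖{a} with ctrb^g_{G,a}(x) ≠ 0; in fact some direct attacker or supporter x of a with no other path to a has strictly negative (respectively strictly positive) gradient-based contribution. -/
open Finset

/-!
Choose a parent `x` of `a` with the largest set of ancestors. Then `x` reaches `a` only through
the edge `(x, a)`, and `α(x)` does not depend on `τ(x)`, so perturbing `τ(x)` changes the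
aggregate of `a` only through the term `±σ(x) = ±ι_{τ(x)}(α(x))`: the map `ε ↦ σ_{G[x←ε]}(a)`
is `ε ↦ ι_{τ(a)}(c ± ι_ε(α(x)))` for a constant `c`. The QE and EB influence functions are
strictly increasing in the initial strength, and strictly increasing in the aggregate at every
point where they move the initial strength; `σ_G(a) ≠ τ(a)` says that `ι_{τ(a)}` moves `τ(a)` at
`α(a)`. By the chain rule the derivative is nonzero with the sign of the edge. Such a parent
exists, for otherwise `α(a) = 0` and `σ_G(a) = ι_{τ(a)}(0) = τ(a)`.
-/

namespace QBAG

variable {G : QBAG}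

@[simp]
lemma mem_attackers {x a : ℕ} : x ∈ G.attackers a ↔ (x, a) ∈ G.att := by
  simp [attackers]

@[simp]
lemma mem_supporters {x a : ℕ} : x ∈ G.supporters a ↔ (x, a) ∈ G.supp := by
  simp [supporters]

lemma WF.mem_args_of_edge (hG : G.WF) {y b : ℕ} (h : G.edge y b) : y ∈ G.args ∧ b ∈ G.args :=
  h.elim (hG.1 _) (hG.2.1 _)

lemma WF.setTau (hG : G.WF) (x : ℕ) {ε : ℝ} (hε : ε ∈ Set.Icc (0 : ℝ) 1) :
    (G.setTau x ε).WF := by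
  refine ⟨hG.1, hG.2.1, hG.2.2.1, fun b hb => ?_⟩
  rcases eq_or_ne b x with rfl | hbx
  · simpa [QBAG.setTau] using hε
  · simpa [QBAG.setTau, hbx] using hG.2.2.2 b hb

lemma setTau_tau_self (x : ℕ) (ε : ℝ) : (G.setTau x ε).tau x = ε :=
  Function.update_self _ _ _

lemma setTau_tau_of_ne {x b : ℕ} (h : b ≠ x) (ε : ℝ) : (G.setTau x ε).tau b = G.tau b :=
  Function.update_of_ne h _ _

open Classical in
noncomputable def ancestors (G : QBAG) (b : ℕ) : Finset ℕ :=
  G.args.filter fun z => Relation.TransGen G.edge z b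

lemma mem_ancestors {z b : ℕ} :
    z ∈ G.ancestors b ↔ z ∈ G.args ∧ Relation.TransGen G.edge z b := by
  simp [ancestors]

lemma card_ancestors_lt (hG : G.WF) (hAc : G.Acyclic) {y b : ℕ}
    (h : Relation.TransGen G.edge y b) : #(G.ancestors y) < #(G.ancestors b) := by
  refine card_lt_card ⟨fun z hz => ?_, fun hsub => ?_⟩
  · rw [mem_ancestors] at hz ⊢
    exact ⟨hz.1, hz.2.trans h⟩
  · obtain ⟨c, hyc, -⟩ := Relation.TransGen.head'_iff.1 h
    exact hAc y (mem_ancestors.1 (hsub (mem_ancestors.2 ⟨(hG.mem_args_of_edge hyc).1, h⟩))).2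

lemma wellFounded_edge (hG : G.WF) (hAc : G.Acyclic) : WellFounded G.edge :=
  Subrelation.wf (fun h => card_ancestors_lt hG hAc (.single h))
    (measure fun b => #(G.ancestors b)).wf

lemma exists_edge_forall_reach_eq (hG : G.WF) (hAc : G.Acyclic) {a : ℕ}
    (h : ∃ x, G.edge x a) :
    ∃ x, G.edge x a ∧ ∀ y, G.edge x y → Relation.ReflTransGen G.edge y a → y = a := by
  classical
  have parent : ∀ {z}, z ∈ G.attackers a ∪ G.supporters a ↔ G.edge z a := by simp [edge]
  obtain ⟨x, hx, hmax⟩ := exists_max_image _ (fun z => #(G.ancestors z))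
    (h.imp fun _ => parent.2)
  refine ⟨x, parent.1 hx, fun y hxy hya => ?_⟩
  by_contra hy
  obtain ⟨z, hyz, hza⟩ := (Relation.ReflTransGen.cases_tail hya).resolve_left (Ne.symm hy)
  exact (hmax z (parent.2 hza)).not_gt (card_ancestors_lt hG hAc (.head' hxy hyz))

end QBAG

open QBAG

section SumAggregation

variable {G : QBAG} {s t : ℕ → ℝ} {a : ℕ}

lemma sumAgg_setTau (x : ℕ) (ε : ℝ) : sumAgg (G.setTau x ε) = sumAgg G := rfl

lemma sumAgg_congr (h : ∀ y, G.edge y a → s y = t y) : sumAgg G s a = sumAgg G t a := by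
  unfold sumAgg
  congr 1 <;> refine sum_congr rfl fun y hy => h y ?_
  · exact .inr (mem_supporters.1 hy)
  · exact .inl (mem_attackers.1 hy)

lemma sumAgg_eq_zero_of_forall_not_edge (h : ∀ y, ¬ G.edge y a) : sumAgg G s a = 0 := by
  rw [sumAgg_congr (t := 0) fun y hy => absurd hy (h y)]
  simp [sumAgg]

lemma sumAgg_update_of_att {x : ℕ} (v : ℝ) (hatt : (x, a) ∈ G.att) (hsupp : (x, a) ∉ G.supp) :
    sumAgg G (Function.update s x v) a = sumAgg G s a - (v - s x) := by
  have hx : x ∈ G.attackers a := mem_attackers.2 hatt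
  have hx' : x ∉ G.supporters a := fun h => hsupp (mem_supporters.1 h)
  simp only [sumAgg, sum_update_of_notMem hx', sum_update_of_mem hx,
    sum_eq_add_sum_sdiff_singleton_of_mem hx s]
  ring

lemma sumAgg_update_of_supp {x : ℕ} (v : ℝ) (hsupp : (x, a) ∈ G.supp) (hatt : (x, a) ∉ G.att) :
    sumAgg G (Function.update s x v) a = sumAgg G s a + (v - s x) := by
  have hx : x ∈ G.supporters a := mem_supporters.2 hsupp
  have hx' : x ∉ G.attackers a := fun h => hatt (mem_attackers.1 h)
  simp only [sumAgg, sum_update_of_notMem hx', sum_update_of_mem hx,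
    sum_eq_add_sum_sdiff_singleton_of_mem hx s]
  ring

end SumAggregation

namespace IsSemantics

variable {ι : ℝ → ℝ → ℝ} {σ : QBAG → ℕ → ℝ} {G : QBAG} {x : ℕ} {ε : ℝ}

theorem apply_setTau_of_not_reach (hσ : IsSemantics sumAgg ι σ) (hG : G.WF) (hAc : G.Acyclic)
    (hε : ε ∈ Set.Icc (0 : ℝ) 1) {b : ℕ} (hb : b ∈ G.args)
    (hxb : ¬ Relation.ReflTransGen G.edge x b) : σ (G.setTau x ε) b = σ G b := by
  induction b using (wellFounded_edge hG hAc).induction with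
  | _ b ih =>
    have hbx : b ≠ x := by rintro rfl; exact hxb .refl
    rw [hσ _ (hG.setTau x hε) hAc b hb, hσ G hG hAc b hb, setTau_tau_of_ne hbx, sumAgg_setTau]
    exact congrArg _ <| sumAgg_congr fun y hy =>
      ih y hy (hG.mem_args_of_edge hy).1 fun hxy => hxb (hxy.tail hy)

theorem apply_setTau_self (hσ : IsSemantics sumAgg ι σ) (hG : G.WF) (hAc : G.Acyclic)
    (hε : ε ∈ Set.Icc (0 : ℝ) 1) (hx : x ∈ G.args) :
    σ (G.setTau x ε) x = ι ε (sumAgg G (σ G) x) := by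
  rw [hσ _ (hG.setTau x hε) hAc x hx, setTau_tau_self, sumAgg_setTau]
  exact congrArg _ <| sumAgg_congr fun y hy =>
    hσ.apply_setTau_of_not_reach hG hAc hε (hG.mem_args_of_edge hy).1
      fun hxy => hAc x (.tail' hxy hy)

theorem apply_setTau_eq_update (hσ : IsSemantics sumAgg ι σ) (hG : G.WF) (hAc : G.Acyclic)
    (hε : ε ∈ Set.Icc (0 : ℝ) 1) {a : ℕ} (hxa : G.edge x a)
    (hpath : ∀ y, G.edge x y → Relation.ReflTransGen G.edge y a → y = a) :
    σ (G.setTau x ε) a =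
      ι (G.tau a) (sumAgg G (Function.update (σ G) x (ι ε (sumAgg G (σ G) x))) a) := by
  have hax : a ≠ x := by rintro rfl; exact hAc a (.single hxa)
  rw [hσ _ (hG.setTau x hε) hAc a (hG.mem_args_of_edge hxa).2, setTau_tau_of_ne hax,
    sumAgg_setTau]
  refine congrArg _ (sumAgg_congr fun y hya => ?_)
  rcases eq_or_ne y x with rfl | hyx
  · rw [Function.update_self]
    exact hσ.apply_setTau_self hG hAc hε (hG.mem_args_of_edge hxa).1
  · rw [Function.update_of_ne hyx]
    refine hσ.apply_setTau_of_not_reach hG hAc hε (hG.mem_args_of_edge hya).1 fun hxy => ?_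
    obtain ⟨z, hxz, hzy⟩ := Relation.TransGen.head'_iff.1
      ((Relation.reflTransGen_iff_eq_or_transGen.1 hxy).resolve_left hyx)
    obtain rfl := hpath z hxz (hzy.tail hya)
    exact hAc z (.tail' hzy hya)

end IsSemantics

lemma ctrbG_eq_of_hasDerivAt {σ : QBAG → ℕ → ℝ} {G : QBAG} {a x : ℕ} {g : ℝ → ℝ} {d : ℝ}
    (hx : G.tau x ∈ Set.Icc (0 : ℝ) 1) (hg : ∀ ε ∈ Set.Icc (0 : ℝ) 1, σ (G.setTau x ε) a = g ε)
    (hd : HasDerivAt g d (G.tau x)) : ctrbG σ G a x = d :=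
  (hd.hasDerivWithinAt.congr hg (hg _ hx)).derivWithin (uniqueDiffOn_Icc zero_lt_one _ hx)

/-- The derivative in `s` may vanish where `ι w` fixes `w`: for QE at `s = 0` and, when
`w ∈ {0, 1}`, on a half-line; for EB everywhere when `w ∈ {0, 1}`. -/
structure IsStrictInfluence (ι : ℝ → ℝ → ℝ) : Prop where
  apply_zero : ∀ w ∈ Set.Icc (0 : ℝ) 1, ι w 0 = w
  exists_hasDerivAt_weight : ∀ s, ∀ w ∈ Set.Icc (0 : ℝ) 1, ∃ d > 0, HasDerivAt (ι · s) d w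
  exists_hasDerivAt_of_ne : ∀ w ∈ Set.Icc (0 : ℝ) 1, ∀ s, ι w s ≠ w →
    ∃ d > 0, HasDerivAt (ι w) d s

namespace IsStrictInfluence

variable {ι : ℝ → ℝ → ℝ} {σ : QBAG → ℕ → ℝ} {G : QBAG}

theorem exists_parent_ctrbG_sign (hι : IsStrictInfluence ι) (hσ : IsSemantics sumAgg ι σ)
    (hG : G.WF) (hAc : G.Acyclic) {a : ℕ} (ha : a ∈ G.args) (hne : σ G a ≠ G.tau a) :
    ∃ x ∈ G.args, x ≠ a ∧ G.edge x a ∧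
      (∀ y, G.edge x y → Relation.ReflTransGen G.edge y a → y = a) ∧
      ((x, a) ∈ G.att → ctrbG σ G a x < 0) ∧ ((x, a) ∈ G.supp → ctrbG σ G a x > 0) := by
  have hparent : ∃ x, G.edge x a := by
    by_contra! h
    rw [hσ G hG hAc a ha, sumAgg_eq_zero_of_forall_not_edge h,
      hι.apply_zero _ (hG.2.2.2 a ha)] at hne
    exact hne rfl
  obtain ⟨x, hxa, hpath⟩ := exists_edge_forall_reach_eq hG hAc hparent
  have hx : x ∈ G.args := (hG.mem_args_of_edge hxa).1
  have htx : G.tau x ∈ Set.Icc (0 : ℝ) 1 := hG.2.2.2 x hx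
  set c := sumAgg G (σ G) x
  set S := sumAgg G (σ G) a
  obtain ⟨d₁, hd₁, hin⟩ := hι.exists_hasDerivAt_weight c _ htx
  obtain ⟨d₂, hd₂, hout⟩ :=
    hι.exists_hasDerivAt_of_ne _ (hG.2.2.2 a ha) S (hσ G hG hAc a ha ▸ hne)
  have hderiv (k : ℝ) : HasDerivAt (fun ε => ι (G.tau a) (S + k * (ι ε c - σ G x)))
      (d₂ * (k * d₁)) (G.tau x) :=
    hout.comp_of_eq (G.tau x) (((hin.sub_const (σ G x)).const_mul k).const_add S)
      (by rw [hσ G hG hAc x hx]; ring)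
  have hctrb (k : ℝ) (hk : ∀ v, sumAgg G (Function.update (σ G) x v) a = S + k * (v - σ G x)) :
      ctrbG σ G a x = d₂ * (k * d₁) :=
    ctrbG_eq_of_hasDerivAt htx (fun ε hε => by
      rw [hσ.apply_setTau_eq_update hG hAc hε hxa hpath, hk]) (hderiv k)
  refine ⟨x, hx, ?_, hxa, hpath, fun hatt => ?_, fun hsupp => ?_⟩
  · rintro rfl
    exact hAc x (.single hxa)
  · have hsupp : (x, a) ∉ G.supp := disjoint_left.1 hG.2.2.1 hatt
    rw [hctrb (-1) fun v => by rw [sumAgg_update_of_att v hatt hsupp]; ring]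
    nlinarith
  · have hatt : (x, a) ∉ G.att := disjoint_right.1 hG.2.2.1 hsupp
    rw [hctrb 1 fun v => by rw [sumAgg_update_of_supp v hsupp hatt]; ring]
    positivity

end IsStrictInfluence

section QE

lemma h2_of_nonpos {x : ℝ} (hx : x ≤ 0) : h2 x = 0 := by
  simp [h2, max_eq_left hx]

lemma h2_lt_one (x : ℝ) : h2 x < 1 := by
  rw [h2, div_lt_one (by positivity)]
  linarith

lemma hasDerivAt_h2_of_neg {x : ℝ} (hx : x < 0) : HasDerivAt h2 0 x :=
  (hasDerivAt_const x 0).congr_of_eventuallyEq <| by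
    filter_upwards [Iio_mem_nhds hx] with y hy using h2_of_nonpos hy.le

lemma hasDerivAt_h2_of_pos {x : ℝ} (hx : 0 < x) :
    HasDerivAt h2 (2 * x / (1 + x ^ 2) ^ 2) x := by
  have h := (hasDerivAt_pow 2 x).div ((hasDerivAt_pow 2 x).const_add 1) (by positivity)
  refine (h.congr_of_eventuallyEq ?_).congr_deriv ?_
  · filter_upwards [Ioi_mem_nhds hx] with y (hy : 0 < y)
    simp [h2, max_eq_right hy.le]
  · field_simp
    ring

lemma hasDerivAt_iotaQE_left (s w : ℝ) : HasDerivAt (iotaQE · s) (1 - h2 (-s) - h2 s) w := by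
  have h := ((hasDerivAt_id w).mul_const (1 - h2 (-s) - h2 s)).add_const (h2 s)
  refine (h.congr_deriv (one_mul _)).congr_of_eventuallyEq (.of_eq ?_)
  ext ε
  simp only [iotaQE, id]
  ring

lemma hasDerivAt_iotaQE_right {w s d₁ d₂ : ℝ} (h₁ : HasDerivAt h2 d₁ (-s))
    (h₂ : HasDerivAt h2 d₂ s) : HasDerivAt (iotaQE w) (w * d₁ + (1 - w) * d₂) s :=
  ((((h₁.comp s (hasDerivAt_neg s)).const_mul w).const_sub w).add
    (h₂.const_mul (1 - w))).congr_deriv (by ring)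

lemma isStrictInfluence_iotaQE : IsStrictInfluence iotaQE where
  apply_zero w _ := by simp [iotaQE, h2_of_nonpos]
  exists_hasDerivAt_weight s w _ := by
    refine ⟨_, ?_, hasDerivAt_iotaQE_left s w⟩
    rcases le_total s 0 with hs | hs
    · linarith [h2_of_nonpos hs, h2_lt_one (-s)]
    · linarith [h2_of_nonpos (neg_nonpos.2 hs), h2_lt_one s]
  exists_hasDerivAt_of_ne w hw s hs := by
    rcases lt_trichotomy s 0 with hneg | rfl | hpos
    · have hw : 0 < w := hw.1.lt_of_ne <| by
        rintro rfl
        simp [iotaQE, h2_of_nonpos hneg.le] at hs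
      refine ⟨_, ?_, hasDerivAt_iotaQE_right (hasDerivAt_h2_of_pos (neg_pos.2 hneg))
        (hasDerivAt_h2_of_neg hneg)⟩
      rw [mul_zero, add_zero]
      exact mul_pos hw (div_pos (by linarith) (by positivity))
    · simp [iotaQE, h2_of_nonpos] at hs
    · have hw : w < 1 := hw.2.lt_of_ne <| by
        rintro rfl
        simp [iotaQE, h2_of_nonpos (neg_nonpos.2 hpos.le)] at hs
      refine ⟨_, ?_, hasDerivAt_iotaQE_right (hasDerivAt_h2_of_neg (neg_neg_of_pos hpos))
        (hasDerivAt_h2_of_pos hpos)⟩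
      rw [mul_zero, zero_add]
      exact mul_pos (by linarith) (by positivity)

end QE

section EB

open Real

lemma hasDerivAt_iotaEB_left (s : ℝ) {w : ℝ} (hw : 0 ≤ w) :
    HasDerivAt (iotaEB · s) ((2 * w + (1 + w ^ 2) * exp s) / (1 + w * exp s) ^ 2) w := by
  have h := (((hasDerivAt_pow 2 w).const_sub 1).div
    (((hasDerivAt_id w).mul_const (exp s)).const_add 1) (by positivity)).const_sub 1
  refine h.congr_deriv ?_
  simp only [id, Nat.cast_ofNat]
  field_simp
  ring

lemma hasDerivAt_iotaEB_right {w : ℝ} (hw : 0 ≤ w) (s : ℝ) :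
    HasDerivAt (iotaEB w) ((1 - w ^ 2) * (w * exp s) / (1 + w * exp s) ^ 2) s := by
  have h := ((hasDerivAt_const s (1 - w ^ 2)).div
    (((hasDerivAt_exp s).const_mul w).const_add 1) (by positivity)).const_sub 1
  refine h.congr_deriv ?_
  field_simp
  ring

lemma isStrictInfluence_iotaEB : IsStrictInfluence iotaEB where
  apply_zero w hw := by
    have : 1 + w ≠ 0 := by linarith [hw.1]
    rw [iotaEB, exp_zero, mul_one]
    field_simp
    ring
  exists_hasDerivAt_weight s w hw :=
    have := hw.1
    ⟨_, by positivity, hasDerivAt_iotaEB_left s hw.1⟩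
  exists_hasDerivAt_of_ne w hw s hs := by
    have hw0 : 0 < w := hw.1.lt_of_ne <| by rintro rfl; simp [iotaEB] at hs
    have hw1 : w < 1 := hw.2.lt_of_ne <| by rintro rfl; simp [iotaEB] at hs
    have : 0 < 1 - w ^ 2 := by nlinarith
    exact ⟨_, by positivity, hasDerivAt_iotaEB_right hw.1 s⟩

end EB

/-- The gradient-based contribution function satisfies contribution
existence w.r.t. the QE and EB semantics; in fact some direct attacker or supporter x of
the topic argument a with no other path to a has strictly negative (for attackers)
respectively strictly positive (for supporters) gradient-based contribution. -/
theorem ctrbG_satisfies_contribution_existence_QE_EB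
    (σ : QBAG → ℕ → ℝ) (hσ : IsQE σ ∨ IsEB σ) :
    ∀ G : QBAG, G.WF → G.Acyclic → ∀ a ∈ G.args, σ G a ≠ G.tau a →
      (∃ x ∈ G.args, x ≠ a ∧ ctrbG σ G a x ≠ 0) ∧
      ∃ x ∈ G.args, x ≠ a ∧ ((x, a) ∈ G.att ∨ (x, a) ∈ G.supp) ∧
        (∀ y, G.edge x y → Relation.ReflTransGen G.edge y a → y = a) ∧
        ((x, a) ∈ G.att → ctrbG σ G a x < 0) ∧
        ((x, a) ∈ G.supp → ctrbG σ G a x > 0) := by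
  intro G hG hAc a ha hne
  obtain ⟨x, hx, hxa, hedge, hpath, hatt, hsupp⟩ := hσ.elim
    (isStrictInfluence_iotaQE.exists_parent_ctrbG_sign · hG hAc ha hne)
    (isStrictInfluence_iotaEB.exists_parent_ctrbG_sign · hG hAc ha hne)
  refine ⟨⟨x, hx, hxa, ?_⟩, x, hx, hxa, hedge, hpath, hatt, hsupp⟩
  rcases hedge with h | h
  exacts [(hatt h).ne, (hsupp h).ne']
end
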